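/- arXiv:1003.4334 — 2 statements merged into one kernel-verified Lean document; each statement's English description precedes it below -/
import Mathlib

section
/- For κ > 0 and fixed t ∈ (0,1], the function r ↦ s_κ(t r)/s_κ(r) is nondecreasing on (0, π/√κ). -/
open Real Set

/-!
Scaling `r ↦ √κ r` reduces the claim to `κ = 1`, i.e. to `x ↦ sin (t x) / sin x` on `(0, π)`.
The numerator of its derivative, `g x = t cos (t x) sin x - sin (t x) cos x`, vanishes at `0`
and has derivative `(1 - t²) sin (t x) sin x ≥ 0` on `[0, π]`, so it is nonnegative there.
-/

noncomputable def sk (κ r : ℝ) : ℝ :=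
  if 0 < κ then Real.sin (Real.sqrt κ * r) / Real.sqrt κ
  else if κ < 0 then Real.sinh (Real.sqrt |κ| * r) / Real.sqrt |κ|
  else r

lemma sk_of_pos {κ : ℝ} (hκ : 0 < κ) (r : ℝ) : sk κ r = sin (√κ * r) / √κ := if_pos hκ

lemma hasDerivAt_sin_const_mul (a x : ℝ) :
    HasDerivAt (fun x => sin (a * x)) (cos (a * x) * a) x := by
  simpa using ((hasDerivAt_id x).const_mul a).sin

lemma hasDerivAt_cos_const_mul (a x : ℝ) :
    HasDerivAt (fun x => cos (a * x)) (-sin (a * x) * a) x := by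
  simpa using ((hasDerivAt_id x).const_mul a).cos

lemma mul_cos_mul_mul_sin_sub_sin_mul_mul_cos_nonneg {t x : ℝ} (ht0 : 0 ≤ t) (ht1 : t ≤ 1)
    (hx0 : 0 ≤ x) (hxπ : x ≤ π) :
    0 ≤ t * cos (t * x) * sin x - sin (t * x) * cos x := by
  set g : ℝ → ℝ := fun x => t * cos (t * x) * sin x - sin (t * x) * cos x
  have hg : ∀ y, HasDerivAt g ((1 - t ^ 2) * (sin (t * y) * sin y)) y := fun y =>
    ((((hasDerivAt_cos_const_mul t y).const_mul t).mul (hasDerivAt_sin y)).sub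
      ((hasDerivAt_sin_const_mul t y).mul (hasDerivAt_cos y))).congr_deriv (by ring)
  have hmono : MonotoneOn g (Icc 0 π) := by
    refine monotoneOn_of_hasDerivWithinAt_nonneg (convex_Icc 0 π)
      (fun y _ => (hg y).continuousAt.continuousWithinAt)
      (fun y _ => (hg y).hasDerivWithinAt) fun y hy => ?_
    rw [interior_Icc] at hy
    have hty : t * y ≤ π := by nlinarith [hy.1, hy.2]
    have := sin_nonneg_of_nonneg_of_le_pi (mul_nonneg ht0 hy.1.le) hty
    have := sin_nonneg_of_nonneg_of_le_pi hy.1.le hy.2.le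
    have : 0 ≤ 1 - t ^ 2 := by nlinarith
    positivity
  simpa [g] using hmono ⟨le_rfl, pi_pos.le⟩ ⟨hx0, hxπ⟩ hx0

lemma monotoneOn_sin_mul_div_sin {t : ℝ} (ht0 : 0 ≤ t) (ht1 : t ≤ 1) :
    MonotoneOn (fun x => sin (t * x) / sin x) (Ioo 0 π) := by
  have hsin : ∀ x ∈ Ioo 0 π, sin x ≠ 0 := fun x hx => (sin_pos_of_mem_Ioo hx).ne'
  have hf : ∀ x ∈ Ioo 0 π, HasDerivAt (fun x => sin (t * x) / sin x)
      ((cos (t * x) * t * sin x - sin (t * x) * cos x) / sin x ^ 2) x :=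
    fun x hx => (hasDerivAt_sin_const_mul t x).div (hasDerivAt_sin x) (hsin x hx)
  refine monotoneOn_of_hasDerivWithinAt_nonneg (convex_Ioo 0 π)
    (fun x hx => (hf x hx).continuousAt.continuousWithinAt)
    (fun x hx => (hf x (interior_subset hx)).hasDerivWithinAt) fun x hx => ?_
  rw [interior_Ioo] at hx
  have := mul_cos_mul_mul_sin_sub_sin_mul_mul_cos_nonneg ht0 ht1 hx.1.le hx.2.le
  exact div_nonneg (by linarith) (sq_nonneg _)

/-- For `κ > 0` and fixed `t ∈ (0,1]`, `r ↦ s_κ(t r)/s_κ(r)` is nondecreasing on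
`(0, π/√κ)`. -/
theorem stmt3 (κ : ℝ) (hκ : 0 < κ) (t : ℝ) (ht : t ∈ Set.Ioc (0:ℝ) 1) :
    MonotoneOn (fun r => sk κ (t * r) / sk κ r) (Set.Ioo 0 (Real.pi / Real.sqrt κ)) := by
  have hc : 0 < √κ := sqrt_pos.mpr hκ
  have hscale : MapsTo (√κ * ·) (Ioo 0 (π / √κ)) (Ioo 0 π) := fun r hr =>
    ⟨mul_pos hc hr.1, by simpa [mul_div_cancel₀ π hc.ne'] using mul_lt_mul_of_pos_left hr.2 hc⟩
  have hcomp := (monotoneOn_sin_mul_div_sin ht.1.le ht.2).comp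
    (fun _ _ _ _ h => mul_le_mul_of_nonneg_left h hc.le) hscale
  refine hcomp.congr fun r _ => ?_
  simp only [Function.comp_apply, sk_of_pos hκ, div_div_div_cancel_right₀ hc.ne', mul_left_comm]
end

section
/- Let λ(ξ) = √(a²·cos²ξ + b²·sin²ξ) with 0 < a ≤ b. If L : ℝⁿ → ℝⁿ is a linear map and e₁,…,eₙ is an orthonormal basis such that ‖L(u)‖ ≤ λ(θ_u) for every unit vector u, where θ_u is the angle between u and e₁, then |det L| ≤ λ(0)·λ(π/2)^{n-1} = a·b^{n-1}. -/
open Real InnerProductGeometry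

/-! Hadamard's inequality bounds `|det L|` by the product of the norms `‖L eᵢ‖`. The hypothesis
bounds `‖L e₁‖` by `λ 0 = a`, and, since `eᵢ ⟂ e₁` for `i ≠ 1`, every other `‖L eᵢ‖` by
`λ (π / 2) = b`. -/

theorem LinearMap.abs_det_le_prod_norm_apply {E : Type*} [NormedAddCommGroup E]
    [InnerProductSpace ℝ E] {n : ℕ} (e : OrthonormalBasis (Fin n) ℝ E) (L : E →ₗ[ℝ] E) :
    |LinearMap.det L| ≤ ∏ i, ‖L (e i)‖ := by
  have : Fact (Module.finrank ℝ E = n) := ⟨by simp [Module.finrank_eq_card_basis e.toBasis]⟩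
  set o := e.toBasis.orientation
  calc |LinearMap.det L| = |e.toBasis.det (L ∘ e)| := by
        rw [Module.Basis.det_comp, ← e.coe_toBasis, Module.Basis.det_self, mul_one]
    _ = |o.volumeForm (L ∘ e)| := (o.volumeForm_robust' e _).symm
    _ ≤ _ := o.abs_volumeForm_apply_le _

/-- Hadamard-inequality step: if `‖L u‖ ≤ λ(angle(u,e₁))` for all unit vectors `u`,
where `λ(ξ) = √(a²cos²ξ + b²sin²ξ)` with `0 < a ≤ b` and `e₁` is the first vector of an
orthonormal basis, then `|det L| ≤ λ(0)·λ(π/2)^{n-1} = a·b^{n-1}`. -/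
theorem stmt5 (n : ℕ) (hn : 0 < n) (a b : ℝ) (ha : 0 < a) (hab : a ≤ b)
    (lam : ℝ → ℝ)
    (hlam : ∀ ξ : ℝ, lam ξ = Real.sqrt (a ^ 2 * Real.cos ξ ^ 2 + b ^ 2 * Real.sin ξ ^ 2))
    (L : EuclideanSpace ℝ (Fin n) →ₗ[ℝ] EuclideanSpace ℝ (Fin n))
    (e : OrthonormalBasis (Fin n) ℝ (EuclideanSpace ℝ (Fin n)))
    (hL : ∀ u : EuclideanSpace ℝ (Fin n), ‖u‖ = 1 →
      ‖L u‖ ≤ lam (InnerProductGeometry.angle u (e ⟨0, hn⟩))) :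
    |LinearMap.det L| ≤ lam 0 * lam (Real.pi / 2) ^ (n - 1) ∧
      lam 0 * lam (Real.pi / 2) ^ (n - 1) = a * b ^ (n - 1) := by
  have hlam_zero : lam 0 = a := by simp [hlam, sqrt_sq ha.le]
  have hlam_pi_div_two : lam (π / 2) = b := by simp [hlam, sqrt_sq (ha.le.trans hab)]
  rw [hlam_zero, hlam_pi_div_two]
  refine ⟨?_, rfl⟩
  obtain ⟨m, rfl⟩ : ∃ m, n = m + 1 := ⟨n - 1, by omega⟩
  change ∀ u, ‖u‖ = 1 → ‖L u‖ ≤ lam (angle u (e 0)) at hL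
  have hL_zero : ‖L (e 0)‖ ≤ a := by
    simpa [angle_self (e.orthonormal.ne_zero 0), hlam_zero] using hL (e 0) (e.orthonormal.1 0)
  have hL_succ (i : Fin m) : ‖L (e i.succ)‖ ≤ b := by
    have h := hL (e i.succ) (e.orthonormal.1 _)
    rwa [(inner_eq_zero_iff_angle_eq_pi_div_two _ _).1 (e.orthonormal.2 i.succ_ne_zero),
      hlam_pi_div_two] at h
  calc |LinearMap.det L| ≤ ∏ i, ‖L (e i)‖ := L.abs_det_le_prod_norm_apply e
    _ = ‖L (e 0)‖ * ∏ i : Fin m, ‖L (e i.succ)‖ := Fin.prod_univ_succ _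
    _ ≤ a * ∏ _i : Fin m, b := by gcongr with i; exact hL_succ i
    _ = a * b ^ m := by simp
end
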